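/- arXiv:2604.10555 — 3 statements merged into one kernel-verified Lean document; each statement's English description precedes it below -/
import Mathlib

section
/- Let g : [0,1]² → ℝ be nonnegative, continuous, and non-decreasing in each coordinate, and suppose (1−u₁)(1−u₂)∫₀^{u₁}∫₀^{u₂} g = u₁u₂ ∫_{u₁}^1∫_{u₂}^1 g for all u₁,u₂ ∈ (0,1). Then g is constant on [0,1]². -/
/-!
At `u₁ = u₂ = ½` the hypothesis says that `g` has the same integral over `[0,½]²` and
`[½,1]²`. By monotonicity `g ≤ g(½,½)` on the first square and `g(½,½) ≤ g` on the second,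
so both integrals are squeezed against `g(½,½) / 4`, and continuity forces `g = g(½,½)` on both
squares. Every point of `[0,1]²` lies between its meet and its join with `(½,½)`, one in each
square, so monotonicity spreads the constant value to the whole unit square.
-/

open MeasureTheory Set intervalIntegral

section IteratedIntegral

variable {f g : ℝ → ℝ → ℝ} {a b c d : ℝ}

theorem continuousOn_parametric_intervalIntegral_of_continuousOn (hab : a ≤ b) (hcd : c ≤ d)
    (hf : ContinuousOn (Function.uncurry f) (Icc a b ×ˢ Icc c d)) :
    ContinuousOn (fun x ↦ ∫ y in c..d, f x y) (Icc a b) := by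
  set fₑ : ℝ → ℝ → ℝ := fun x y ↦ f (projIcc a b hab x) (projIcc c d hcd y)
  have hfₑ : Continuous (Function.uncurry fₑ) :=
    hf.comp_continuous
      (f := fun p : ℝ × ℝ ↦ ((projIcc a b hab p.1 : ℝ), (projIcc c d hcd p.2 : ℝ)))
      (by fun_prop) fun p ↦ ⟨Subtype.prop _, Subtype.prop _⟩
  refine (continuous_parametric_intervalIntegral_of_continuous' hfₑ c d).continuousOn.congr
    fun x hx ↦ integral_congr fun y hy ↦ ?_
  rw [uIcc_of_le hcd] at hy
  simp [fₑ, projIcc_of_mem, hx, hy]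

theorem iteratedIntegral_mono_on (hab : a ≤ b) (hcd : c ≤ d)
    (hf : ContinuousOn (Function.uncurry f) (Icc a b ×ˢ Icc c d))
    (hg : ContinuousOn (Function.uncurry g) (Icc a b ×ˢ Icc c d))
    (hle : ∀ x ∈ Icc a b, ∀ y ∈ Icc c d, f x y ≤ g x y) :
    ∫ x in a..b, ∫ y in c..d, f x y ≤ ∫ x in a..b, ∫ y in c..d, g x y :=
  integral_mono_on hab
    ((continuousOn_parametric_intervalIntegral_of_continuousOn hab hcd hf).intervalIntegrable_of_Icc
      hab)
    ((continuousOn_parametric_intervalIntegral_of_continuousOn hab hcd hg).intervalIntegrable_of_Icc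
      hab)
    fun x hx ↦ integral_mono_on hcd ((hf.uncurry_left x hx).intervalIntegrable_of_Icc hcd)
      ((hg.uncurry_left x hx).intervalIntegrable_of_Icc hcd) (hle x hx)

theorem iteratedIntegral_lt_of_le_of_exists_lt (hab : a < b) (hcd : c < d)
    (hf : ContinuousOn (Function.uncurry f) (Icc a b ×ˢ Icc c d))
    (hg : ContinuousOn (Function.uncurry g) (Icc a b ×ˢ Icc c d))
    (hle : ∀ x ∈ Icc a b, ∀ y ∈ Icc c d, f x y ≤ g x y)
    (hlt : ∃ x ∈ Icc a b, ∃ y ∈ Icc c d, f x y < g x y) :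
    ∫ x in a..b, ∫ y in c..d, f x y < ∫ x in a..b, ∫ y in c..d, g x y := by
  obtain ⟨x₀, hx₀, y₀, hy₀, hlt₀⟩ := hlt
  refine integral_lt_integral_of_continuousOn_of_le_of_exists_lt hab
    (continuousOn_parametric_intervalIntegral_of_continuousOn hab.le hcd.le hf)
    (continuousOn_parametric_intervalIntegral_of_continuousOn hab.le hcd.le hg)
    (fun x hx ↦ integral_mono_on hcd.le ?_ ?_ (hle x (Ioc_subset_Icc_self hx)))
    ⟨x₀, hx₀, ?_⟩
  · exact (hf.uncurry_left x (Ioc_subset_Icc_self hx)).intervalIntegrable_of_Icc hcd.le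
  · exact (hg.uncurry_left x (Ioc_subset_Icc_self hx)).intervalIntegrable_of_Icc hcd.le
  · exact integral_lt_integral_of_continuousOn_of_le_of_exists_lt hcd (hf.uncurry_left x₀ hx₀)
      (hg.uncurry_left x₀ hx₀) (fun y hy ↦ hle x₀ hx₀ y (Ioc_subset_Icc_self hy))
      ⟨y₀, hy₀, hlt₀⟩

theorem eqOn_of_le_of_iteratedIntegral_le (hab : a < b) (hcd : c < d)
    (hf : ContinuousOn (Function.uncurry f) (Icc a b ×ˢ Icc c d))
    (hg : ContinuousOn (Function.uncurry g) (Icc a b ×ˢ Icc c d))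
    (hle : ∀ x ∈ Icc a b, ∀ y ∈ Icc c d, f x y ≤ g x y)
    (hint : ∫ x in a..b, ∫ y in c..d, g x y ≤ ∫ x in a..b, ∫ y in c..d, f x y) :
    EqOn (Function.uncurry f) (Function.uncurry g) (Icc a b ×ˢ Icc c d) := by
  by_contra! hne
  obtain ⟨⟨x, y⟩, ⟨hx, hy⟩, hxy⟩ := not_forall₂.mp hne
  exact (iteratedIntegral_lt_of_le_of_exists_lt hab hcd hf hg hle
    ⟨x, hx, y, hy, (hle x hx y hy).lt_of_ne hxy⟩).not_ge hint

theorem eqOn_const_of_le_of_ge_of_iteratedIntegral_eq {a' b' c' d' v : ℝ} (hab : a < b)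
    (hcd : c < d) (hab' : a' < b') (hcd' : c' < d')
    (harea : (b - a) * (d - c) = (b' - a') * (d' - c'))
    (hf : ContinuousOn (Function.uncurry f) (Icc a b ×ˢ Icc c d))
    (hf' : ContinuousOn (Function.uncurry f) (Icc a' b' ×ˢ Icc c' d'))
    (hle : ∀ x ∈ Icc a b, ∀ y ∈ Icc c d, f x y ≤ v)
    (hge : ∀ x ∈ Icc a' b', ∀ y ∈ Icc c' d', v ≤ f x y)
    (hint : ∫ x in a..b, ∫ y in c..d, f x y = ∫ x in a'..b', ∫ y in c'..d', f x y) :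
    EqOn (Function.uncurry f) (fun _ ↦ v) (Icc a b ×ˢ Icc c d) ∧
      EqOn (Function.uncurry f) (fun _ ↦ v) (Icc a' b' ×ˢ Icc c' d') := by
  have hconst : ∫ _ in a..b, ∫ _ in c..d, v = ∫ _ in a'..b', ∫ _ in c'..d', v := by
    simp only [intervalIntegral.integral_const, smul_eq_mul, ← mul_assoc, harea]
  have hmono := iteratedIntegral_mono_on hab.le hcd.le hf continuousOn_const hle
  have hmono' := iteratedIntegral_mono_on hab'.le hcd'.le continuousOn_const hf' hge
  refine ⟨eqOn_of_le_of_iteratedIntegral_le hab hcd hf continuousOn_const hle ?_,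
    (eqOn_of_le_of_iteratedIntegral_le hab' hcd' continuousOn_const hf' hge ?_).symm⟩ <;>
  linarith

end IteratedIntegral

theorem MonotoneOn.eqOn_const_of_eqOn_const_Icc_split {α β : Type*} [Lattice α]
    [PartialOrder β] {f : α → β} {a m b : α} {v : β} (hf : MonotoneOn f (Icc a b))
    (hm : m ∈ Icc a b)
    (hlo : EqOn f (fun _ ↦ v) (Icc a m)) (hhi : EqOn f (fun _ ↦ v) (Icc m b)) :
    EqOn f (fun _ ↦ v) (Icc a b) := fun x hx ↦ by
  have hinf : x ⊓ m ∈ Icc a m := ⟨le_inf hx.1 hm.1, inf_le_right⟩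
  have hsup : x ⊔ m ∈ Icc m b := ⟨le_sup_right, sup_le hx.2 hm.2⟩
  apply le_antisymm
  · calc f x ≤ f (x ⊔ m) := hf hx ⟨hm.1.trans hsup.1, hsup.2⟩ le_sup_left
      _ = v := hhi hsup
  · calc v = f (x ⊓ m) := (hlo hinf).symm
      _ ≤ f x := hf ⟨hinf.1, hinf.2.trans hm.2⟩ hx inf_le_left

theorem stmt_7_general (g : ℝ → ℝ → ℝ)
    (hg_cont : ContinuousOn (fun p : ℝ × ℝ => g p.1 p.2) (Icc 0 1 ×ˢ Icc 0 1))
    (hg_mono : ∀ p₁ ∈ Icc (0 : ℝ) 1, ∀ p₂ ∈ Icc (0 : ℝ) 1,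
      ∀ q₁ ∈ Icc (0 : ℝ) 1, ∀ q₂ ∈ Icc (0 : ℝ) 1,
      p₁ ≤ q₁ → p₂ ≤ q₂ → g p₁ p₂ ≤ g q₁ q₂)
    (heq : ∀ u₁ ∈ Ioo (0 : ℝ) 1, ∀ u₂ ∈ Ioo (0 : ℝ) 1,
      (1 - u₁) * (1 - u₂) * (∫ p₁ in (0 : ℝ)..u₁, ∫ p₂ in (0 : ℝ)..u₂, g p₁ p₂)
        = u₁ * u₂ * (∫ p₁ in u₁..1, ∫ p₂ in u₂..1, g p₁ p₂)) :
    ∀ p₁ ∈ Icc (0 : ℝ) 1, ∀ p₂ ∈ Icc (0 : ℝ) 1,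
      ∀ q₁ ∈ Icc (0 : ℝ) 1, ∀ q₂ ∈ Icc (0 : ℝ) 1, g p₁ p₂ = g q₁ q₂ := by
  have hmid : (1 / 2 : ℝ) ∈ Icc 0 1 := by norm_num
  have hlo : Icc (0 : ℝ) (1 / 2) ⊆ Icc 0 1 := Icc_subset_Icc_right (by norm_num)
  have hhi : Icc (1 / 2 : ℝ) 1 ⊆ Icc 0 1 := Icc_subset_Icc_left (by norm_num)
  have hbalance : ∫ x in (0 : ℝ)..1 / 2, ∫ y in (0 : ℝ)..1 / 2, g x y
      = ∫ x in (1 / 2 : ℝ)..1, ∫ y in (1 / 2 : ℝ)..1, g x y := by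
    have := heq (1 / 2) (by norm_num) (1 / 2) (by norm_num)
    norm_num at this
    linarith
  obtain ⟨hlo_eq, hhi_eq⟩ :=
    eqOn_const_of_le_of_ge_of_iteratedIntegral_eq (v := g (1 / 2) (1 / 2))
      (by norm_num) (by norm_num) (by norm_num) (by norm_num) (by norm_num)
      (hg_cont.mono (prod_mono hlo hlo)) (hg_cont.mono (prod_mono hhi hhi))
      (fun x hx y hy ↦ hg_mono x (hlo hx) y (hlo hy) _ hmid _ hmid hx.2 hy.2)
      (fun x hx y hy ↦ hg_mono _ hmid _ hmid x (hhi hx) y (hhi hy) hx.1 hy.1) hbalance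
  have hmono : MonotoneOn (Function.uncurry g) (Icc 0 1 ×ˢ Icc 0 1) :=
    fun p hp q hq hpq ↦ hg_mono p.1 hp.1 p.2 hp.2 q.1 hq.1 q.2 hq.2 hpq.1 hpq.2
  have hconst :
      EqOn (Function.uncurry g) (fun _ ↦ g (1 / 2) (1 / 2)) (Icc 0 1 ×ˢ Icc 0 1) := by
    rw [Icc_prod_Icc] at hmono hlo_eq hhi_eq ⊢
    exact hmono.eqOn_const_of_eqOn_const_Icc_split (by norm_num [Prod.le_def]) hlo_eq hhi_eq
  intro p₁ hp₁ p₂ hp₂ q₁ hq₁ q₂ hq₂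
  exact (hconst (mk_mem_prod hp₁ hp₂)).trans (hconst (mk_mem_prod hq₁ hq₂)).symm

/-- If `g : [0,1]² → ℝ` is nonnegative, continuous, non-decreasing in each
coordinate, and `(1−u₁)(1−u₂)∫₀^{u₁}∫₀^{u₂} g = u₁u₂∫_{u₁}^1∫_{u₂}^1 g` holds for all
`u₁, u₂ ∈ (0,1)`, then `g` is constant on `[0,1]²`. -/
theorem stmt_7 (g : ℝ → ℝ → ℝ)
    (hg_nonneg : ∀ p₁ ∈ Icc (0 : ℝ) 1, ∀ p₂ ∈ Icc (0 : ℝ) 1, 0 ≤ g p₁ p₂)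
    (hg_cont : ContinuousOn (fun p : ℝ × ℝ => g p.1 p.2) (Icc 0 1 ×ˢ Icc 0 1))
    (hg_mono : ∀ p₁ ∈ Icc (0 : ℝ) 1, ∀ p₂ ∈ Icc (0 : ℝ) 1,
      ∀ q₁ ∈ Icc (0 : ℝ) 1, ∀ q₂ ∈ Icc (0 : ℝ) 1,
      p₁ ≤ q₁ → p₂ ≤ q₂ → g p₁ p₂ ≤ g q₁ q₂)
    (hg_int : IntegrableOn (fun p : ℝ × ℝ => g p.1 p.2) (Icc 0 1 ×ˢ Icc 0 1))
    (heq : ∀ u₁ ∈ Ioo (0 : ℝ) 1, ∀ u₂ ∈ Ioo (0 : ℝ) 1,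
      (1 - u₁) * (1 - u₂) * (∫ p₁ in (0 : ℝ)..u₁, ∫ p₂ in (0 : ℝ)..u₂, g p₁ p₂)
        = u₁ * u₂ * (∫ p₁ in u₁..1, ∫ p₂ in u₂..1, g p₁ p₂)) :
    ∀ p₁ ∈ Icc (0 : ℝ) 1, ∀ p₂ ∈ Icc (0 : ℝ) 1,
      ∀ q₁ ∈ Icc (0 : ℝ) 1, ∀ q₂ ∈ Icc (0 : ℝ) 1, g p₁ p₂ = g q₁ q₂ :=
  stmt_7_general g hg_cont hg_mono heq
end

section
/- With M⁻(u₁,u₂) = A/(u₁u₂) and M⁺(u₁,u₂) = B/((1−u₁)(1−u₂)) where A, B are the lower and upper rectangle integrals of a nonnegative coordinatewise non-decreasing integrable function g on [0,1]², the bivariate Zenga measure I(u₁,u₂) = 1 − M⁻(u₁,u₂)/M⁺(u₁,u₂) satisfies 0 ≤ I(u₁,u₂) ≤ 1 whenever M⁺(u₁,u₂) > 0. -/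
open MeasureTheory Set intervalIntegral

/-- With `M⁻ = A/(u₁u₂)` and `M⁺ = B/((1−u₁)(1−u₂))`, where `A`, `B` are the
lower and upper rectangle integrals of a nonnegative coordinatewise non-decreasing
integrable `g` on `[0,1]²`, the bivariate Zenga measure `I = 1 − M⁻/M⁺` satisfies
`0 ≤ I ≤ 1` whenever `M⁺ > 0`. -/
theorem stmt_8 (g : ℝ → ℝ → ℝ)
    (hg_nonneg : ∀ p₁ ∈ Icc (0 : ℝ) 1, ∀ p₂ ∈ Icc (0 : ℝ) 1, 0 ≤ g p₁ p₂)
    (hg_mono : ∀ p₁ ∈ Icc (0 : ℝ) 1, ∀ p₂ ∈ Icc (0 : ℝ) 1,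
      ∀ q₁ ∈ Icc (0 : ℝ) 1, ∀ q₂ ∈ Icc (0 : ℝ) 1,
      p₁ ≤ q₁ → p₂ ≤ q₂ → g p₁ p₂ ≤ g q₁ q₂)
    (hg_int : IntegrableOn (fun p : ℝ × ℝ => g p.1 p.2) (Icc 0 1 ×ˢ Icc 0 1))
    (u₁ u₂ : ℝ) (hu₁ : u₁ ∈ Ioo (0 : ℝ) 1) (hu₂ : u₂ ∈ Ioo (0 : ℝ) 1)
    (Mminus Mplus I : ℝ)
    (hMm : Mminus = (∫ p₁ in (0 : ℝ)..u₁, ∫ p₂ in (0 : ℝ)..u₂, g p₁ p₂) / (u₁ * u₂))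
    (hMp : Mplus = (∫ p₁ in u₁..1, ∫ p₂ in u₂..1, g p₁ p₂) / ((1 - u₁) * (1 - u₂)))
    (hMp_pos : 0 < Mplus)
    (hI : I = 1 - Mminus / Mplus) :
    0 ≤ I ∧ I ≤ 1 := by
  obtain ⟨hu₁0, hu₁1⟩ := hu₁
  obtain ⟨hu₂0, hu₂1⟩ := hu₂
  have hu₁m : u₁ ∈ Icc (0:ℝ) 1 := ⟨le_of_lt hu₁0, le_of_lt hu₁1⟩
  have hu₂m : u₂ ∈ Icc (0:ℝ) 1 := ⟨le_of_lt hu₂0, le_of_lt hu₂1⟩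
  -- slices are monotone, hence interval integrable
  have hslice : ∀ p₁ ∈ Icc (0:ℝ) 1, ∀ a ∈ Icc (0:ℝ) 1, ∀ b ∈ Icc (0:ℝ) 1,
      IntervalIntegrable (fun p₂ => g p₁ p₂) volume a b := by
    intro p₁ hp₁ a ha b hb
    have hmono : MonotoneOn (fun p₂ => g p₁ p₂) (uIcc a b) := by
      intro x hx y hy hxy
      have hsub : uIcc a b ⊆ Icc (0:ℝ) 1 := uIcc_subset_Icc ha hb
      exact hg_mono p₁ hp₁ x (hsub hx) p₁ hp₁ y (hsub hy) le_rfl hxy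
    exact hmono.intervalIntegrable
  -- the inner integral function, monotone in p₁
  have hFmono : ∀ a ∈ Icc (0:ℝ) 1, ∀ b ∈ Icc (0:ℝ) 1, a ≤ b →
      MonotoneOn (fun p₁ => ∫ p₂ in a..b, g p₁ p₂) (Icc (0:ℝ) 1) := by
    intro a ha b hb hab x hx y hy hxy
    apply intervalIntegral.integral_mono_on hab (hslice x hx a ha b hb)
      (hslice y hy a ha b hb)
    intro t ht
    have ht' : t ∈ Icc (0:ℝ) 1 := ⟨le_trans ha.1 ht.1, le_trans ht.2 hb.2⟩
    exact hg_mono x hx t ht' y hy t ht' hxy le_rfl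
  have hFint : ∀ a ∈ Icc (0:ℝ) 1, ∀ b ∈ Icc (0:ℝ) 1, a ≤ b →
      ∀ c ∈ Icc (0:ℝ) 1, ∀ d ∈ Icc (0:ℝ) 1,
      IntervalIntegrable (fun p₁ => ∫ p₂ in a..b, g p₁ p₂) volume c d := by
    intro a ha b hb hab c hc d hd
    exact ((hFmono a ha b hb hab).mono (uIcc_subset_Icc hc hd)).intervalIntegrable
  have h01 : (0:ℝ) ∈ Icc (0:ℝ) 1 := ⟨le_rfl, zero_le_one⟩
  have h11 : (1:ℝ) ∈ Icc (0:ℝ) 1 := ⟨zero_le_one, le_rfl⟩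
  set G := g u₁ u₂ with hG
  -- A ≤ G * u₂ * u₁
  have hA_le : (∫ p₁ in (0:ℝ)..u₁, ∫ p₂ in (0:ℝ)..u₂, g p₁ p₂) ≤ G * u₂ * u₁ := by
    have h1 : (∫ p₁ in (0:ℝ)..u₁, ∫ p₂ in (0:ℝ)..u₂, g p₁ p₂)
        ≤ ∫ _p₁ in (0:ℝ)..u₁, G * u₂ := by
      apply intervalIntegral.integral_mono_on (le_of_lt hu₁0)
        (hFint 0 h01 u₂ hu₂m (le_of_lt hu₂0) 0 h01 u₁ hu₁m)
        intervalIntegrable_const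
      intro p₁ hp₁
      have hp₁' : p₁ ∈ Icc (0:ℝ) 1 := ⟨hp₁.1, le_trans hp₁.2 (le_of_lt hu₁1)⟩
      have h2 : (∫ p₂ in (0:ℝ)..u₂, g p₁ p₂) ≤ ∫ _p₂ in (0:ℝ)..u₂, G := by
        apply intervalIntegral.integral_mono_on (le_of_lt hu₂0)
          (hslice p₁ hp₁' 0 h01 u₂ hu₂m) intervalIntegrable_const
        intro p₂ hp₂
        have hp₂' : p₂ ∈ Icc (0:ℝ) 1 := ⟨hp₂.1, le_trans hp₂.2 (le_of_lt hu₂1)⟩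
        exact hg_mono p₁ hp₁' p₂ hp₂' u₁ hu₁m u₂ hu₂m hp₁.2 hp₂.2
      have he : (∫ _p₂ in (0:ℝ)..u₂, G) = G * u₂ := by
        rw [intervalIntegral.integral_const, smul_eq_mul]; ring
      linarith [h2, he.le]
    have he : (∫ _p₁ in (0:ℝ)..u₁, G * u₂) = G * u₂ * u₁ := by
      rw [intervalIntegral.integral_const, smul_eq_mul]; ring
    linarith [h1, he.le]
  -- G * (1-u₂) * (1-u₁) ≤ B
  have hB_ge : G * (1-u₂) * (1-u₁) ≤ ∫ p₁ in u₁..1, ∫ p₂ in u₂..1, g p₁ p₂ := by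
    have h1 : (∫ _p₁ in u₁..(1:ℝ), G * (1-u₂))
        ≤ ∫ p₁ in u₁..1, ∫ p₂ in u₂..1, g p₁ p₂ := by
      apply intervalIntegral.integral_mono_on (le_of_lt hu₁1)
        intervalIntegrable_const
        (hFint u₂ hu₂m 1 h11 (le_of_lt hu₂1) u₁ hu₁m 1 h11)
      intro p₁ hp₁
      have hp₁' : p₁ ∈ Icc (0:ℝ) 1 := ⟨le_trans (le_of_lt hu₁0) hp₁.1, hp₁.2⟩
      have h2 : (∫ _p₂ in u₂..(1:ℝ), G) ≤ ∫ p₂ in u₂..1, g p₁ p₂ := by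
        apply intervalIntegral.integral_mono_on (le_of_lt hu₂1)
          intervalIntegrable_const (hslice p₁ hp₁' u₂ hu₂m 1 h11)
        intro p₂ hp₂
        have hp₂' : p₂ ∈ Icc (0:ℝ) 1 := ⟨le_trans (le_of_lt hu₂0) hp₂.1, hp₂.2⟩
        exact hg_mono u₁ hu₁m u₂ hu₂m p₁ hp₁' p₂ hp₂' hp₁.1 hp₂.1
      have he : (∫ _p₂ in u₂..(1:ℝ), G) = G * (1-u₂) := by
        rw [intervalIntegral.integral_const, smul_eq_mul]; ring
      linarith [h2, he.ge]
    have he : (∫ _p₁ in u₁..(1:ℝ), G * (1-u₂)) = G * (1-u₂) * (1-u₁) := by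
      rw [intervalIntegral.integral_const, smul_eq_mul]; ring
    linarith [h1, he.ge]
  -- A ≥ 0
  have hA_nonneg : 0 ≤ ∫ p₁ in (0:ℝ)..u₁, ∫ p₂ in (0:ℝ)..u₂, g p₁ p₂ := by
    apply intervalIntegral.integral_nonneg (le_of_lt hu₁0)
    intro p₁ hp₁
    have hp₁' : p₁ ∈ Icc (0:ℝ) 1 := ⟨hp₁.1, le_trans hp₁.2 (le_of_lt hu₁1)⟩
    apply intervalIntegral.integral_nonneg (le_of_lt hu₂0)
    intro p₂ hp₂
    exact hg_nonneg p₁ hp₁' p₂ ⟨hp₂.1, le_trans hp₂.2 (le_of_lt hu₂1)⟩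
  have hu₁u₂ : 0 < u₁ * u₂ := mul_pos hu₁0 hu₂0
  have h1u : 0 < (1 - u₁) * (1 - u₂) := mul_pos (by linarith) (by linarith)
  have hMm_nonneg : 0 ≤ Mminus := by
    rw [hMm]; exact div_nonneg hA_nonneg (le_of_lt hu₁u₂)
  have hMm_le : Mminus ≤ G := by
    rw [hMm, div_le_iff₀ hu₁u₂]
    calc (∫ p₁ in (0:ℝ)..u₁, ∫ p₂ in (0:ℝ)..u₂, g p₁ p₂) ≤ G * u₂ * u₁ := hA_le
      _ = G * (u₁ * u₂) := by ring
  have hMp_ge : G ≤ Mplus := by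
    rw [hMp, le_div_iff₀ h1u]
    calc G * ((1-u₁) * (1-u₂)) = G * (1-u₂) * (1-u₁) := by ring
      _ ≤ _ := hB_ge
  have hdiv_le : Mminus / Mplus ≤ 1 :=
    (div_le_one hMp_pos).mpr (le_trans hMm_le hMp_ge)
  have hdiv_nonneg : 0 ≤ Mminus / Mplus := div_nonneg hMm_nonneg (le_of_lt hMp_pos)
  constructor <;> rw [hI] <;> linarith
end

section
/- Let Q : (0,1) → ℝ be continuous, nonnegative, with μ = ∫₀¹ Q > 0, and define J(u) = ∫₀^u Q(p)dp and I(u) = 1 − [(1−u)J(u)]/[u(μ−J(u))] (assuming μ − J(u) > 0 for u ∈ (0,1)). Then J(u) = μ·u·(1−I(u))/(1 − u·I(u)), and consequently Q(u) = d/du [μ u (1−I(u))/(1 − u I(u))] wherever I is differentiable. In particular, I determines Q uniquely. -/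
open MeasureTheory Set intervalIntegral

lemma inv_formula {μ j u iu : ℝ} (hu0 : 0 < u) (hu1 : u < 1) (hμ : 0 < μ)
    (hpos : 0 < μ - j) (hi : iu = 1 - ((1 - u) * j) / (u * (μ - j))) :
    j = μ * u * (1 - iu) / (1 - u * iu) := by
  have hune : u ≠ 0 := ne_of_gt hu0
  have hdne : μ - j ≠ 0 := ne_of_gt hpos
  have h1u : (1 : ℝ) - u ≠ 0 := by linarith
  have h1 : 1 - u * iu = (1 - u) * μ / (μ - j) := by
    rw [hi]; field_simp; ring
  have h2 : 1 - iu = (1 - u) * j / (u * (μ - j)) := by rw [hi]; ring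
  rw [h1, h2]
  field_simp

lemma deriv_J (Q : ℝ → ℝ) (hQ_cont : ContinuousOn Q (Ioo (0 : ℝ) 1))
    (hQ_int : IntervalIntegrable Q volume 0 1) {u : ℝ} (hu : u ∈ Ioo (0 : ℝ) 1) :
    HasDerivAt (fun v => ∫ p in (0 : ℝ)..v, Q p) (Q u) u := by
  obtain ⟨hu0, hu1⟩ := hu
  apply intervalIntegral.integral_hasDerivAt_right
  · refine hQ_int.mono_set ?_
    rw [uIcc_of_le hu0.le, uIcc_of_le zero_le_one]
    exact Icc_subset_Icc le_rfl hu1.le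
  · exact ⟨Ioo 0 1, isOpen_Ioo.mem_nhds ⟨hu0, hu1⟩,
      hQ_cont.aestronglyMeasurable measurableSet_Ioo⟩
  · exact hQ_cont.continuousAt (isOpen_Ioo.mem_nhds ⟨hu0, hu1⟩)

/-- For `Q` continuous, nonnegative on `(0,1)` with `μ = ∫₀¹ Q > 0`,
`J(u) = ∫₀ᵘ Q` and `I(u) = 1 − [(1−u)J(u)]/[u(μ−J(u))]` (with `μ − J(u) > 0`), the
inversion formula `J(u) = μ·u·(1−I(u))/(1 − u·I(u))` holds; consequently
`Q(u) = d/du [μ u (1−I(u))/(1 − u I(u))]` wherever `I` is differentiable, and `I`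
determines `Q` uniquely. -/
theorem stmt_12 (Q : ℝ → ℝ) (μ : ℝ) (J I : ℝ → ℝ)
    (hQ_nonneg : ∀ p ∈ Ioo (0 : ℝ) 1, 0 ≤ Q p)
    (hQ_cont : ContinuousOn Q (Ioo (0 : ℝ) 1))
    (hQ_int : IntervalIntegrable Q volume 0 1)
    (hμ : μ = ∫ p in (0 : ℝ)..1, Q p) (hμ_pos : 0 < μ)
    (hJ : ∀ u, J u = ∫ p in (0 : ℝ)..u, Q p)
    (hpos : ∀ u ∈ Ioo (0 : ℝ) 1, 0 < μ - J u)
    (hI : ∀ u ∈ Ioo (0 : ℝ) 1, I u = 1 - ((1 - u) * J u) / (u * (μ - J u))) :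
    (∀ u ∈ Ioo (0 : ℝ) 1, J u = μ * u * (1 - I u) / (1 - u * I u)) ∧
    (∀ u ∈ Ioo (0 : ℝ) 1, DifferentiableAt ℝ I u →
      HasDerivAt (fun v => μ * v * (1 - I v) / (1 - v * I v)) (Q u) u) ∧
    (∀ Q' : ℝ → ℝ, (∀ p ∈ Ioo (0 : ℝ) 1, 0 ≤ Q' p) →
      ContinuousOn Q' (Ioo (0 : ℝ) 1) → IntervalIntegrable Q' volume 0 1 →
      (μ = ∫ p in (0 : ℝ)..1, Q' p) →
      (∀ u ∈ Ioo (0 : ℝ) 1, 0 < μ - ∫ p in (0 : ℝ)..u, Q' p) →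
      (∀ u ∈ Ioo (0 : ℝ) 1,
        I u = 1 - ((1 - u) * ∫ p in (0 : ℝ)..u, Q' p) / (u * (μ - ∫ p in (0 : ℝ)..u, Q' p))) →
      ∀ u ∈ Ioo (0 : ℝ) 1, Q' u = Q u) := by
  have part1 : ∀ u ∈ Ioo (0 : ℝ) 1, J u = μ * u * (1 - I u) / (1 - u * I u) := by
    intro u hu
    exact inv_formula hu.1 hu.2 hμ_pos (hpos u hu) (hI u hu)
  refine ⟨part1, ?_, ?_⟩
  · intro u hu _
    have hd : HasDerivAt (fun v => ∫ p in (0 : ℝ)..v, Q p) (Q u) u :=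
      deriv_J Q hQ_cont hQ_int hu
    have hd' : HasDerivAt J (Q u) u := by
      have : J = fun v => ∫ p in (0 : ℝ)..v, Q p := funext hJ
      rw [this]; exact hd
    apply hd'.congr_of_eventuallyEq
    filter_upwards [isOpen_Ioo.mem_nhds hu] with v hv
    exact (part1 v hv).symm
  · intro Q' hQ'_nonneg hQ'_cont hQ'_int hμ' hpos' hI' u hu
    have part1' : ∀ v ∈ Ioo (0 : ℝ) 1,
        (∫ p in (0 : ℝ)..v, Q' p) = μ * v * (1 - I v) / (1 - v * I v) := by
      intro v hv
      exact inv_formula hv.1 hv.2 hμ_pos (hpos' v hv) (hI' v hv)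
    have heq : ∀ v ∈ Ioo (0 : ℝ) 1, (∫ p in (0 : ℝ)..v, Q' p) = J v := by
      intro v hv; rw [part1' v hv, part1 v hv]
    have hd' : HasDerivAt (fun v => ∫ p in (0 : ℝ)..v, Q' p) (Q' u) u :=
      deriv_J Q' hQ'_cont hQ'_int hu
    have hd : HasDerivAt J (Q u) u := by
      have : J = fun v => ∫ p in (0 : ℝ)..v, Q p := funext hJ
      rw [this]; exact deriv_J Q hQ_cont hQ_int hu
    have hdJ' : HasDerivAt J (Q' u) u := by
      apply hd'.congr_of_eventuallyEq
      filter_upwards [isOpen_Ioo.mem_nhds hu] with v hv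
      exact (heq v hv).symm
    exact hdJ'.unique hd
end
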